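/- Suppose (a₁,b₁,T₁) and (a₂,b₂,T₂) are 4-chained. Then s_n(b₁,T₁) = s_{4n}(b₂,T₂) for every integer n ≥ 0, and a₁·T₁·b₁^{n−1} = a₂·T₂·b₂^{4n−1} for every integer n ≥ 1; consequently the maximum of |G_{a₁,b₁,T₁}| over [s_{n−1}(b₁,T₁), s_n(b₁,T₁)] equals the maximum of |G_{a₂,b₂,T₂}| over [s_{4(n−1)}(b₂,T₂), s_{4n}(b₂,T₂)]. -/

import Mathlib

open Real Filter Set

/-!
On the `n`-th segment `[s_n, s_{n+1}]` the integral of `N` is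
`G(χ) = (-1)^n a b^n T sin((χ - s_n)/(b^n T))`: the argument of the sine runs from `0` to `π`,
so `G` vanishes at every breakpoint and `|G|` peaks at `|a| T b^n` in the middle of the segment.
Hence the maximum of `|G|` over `[s_m, s_{q+1}]` is `|a| T b^q`, the peak of the last segment.
For 4-chained triples, `s_n(b₁,T₁) = s_{4n}(b₂,T₂)` because `T₁/(b₁-1) = T₂/(b₂-1)`, and the
last peaks `a₁ T₁ b₁^{n-1}` and `a₂ T₂ b₂^{4n-1}` coincide.
-/

/-- Breakpoints `s_n(b,T) = T·π·(b^n − 1)/(b − 1)`. -/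
noncomputable def brk (b T : ℝ) (n : ℕ) : ℝ := T * Real.pi * (b ^ n - 1) / (b - 1)

/-- Index of the segment containing `x ≥ 0`: the unique `m` with `s_m ≤ x < s_{m+1}`
(for `b > 1`, `T > 0`). -/
noncomputable def seg (b T x : ℝ) : ℕ := sInf {n : ℕ | x < brk b T (n + 1)}

/-- The saturated Nussbaum function `N_{a,b,T}`: on `[s_{n−1}, s_n)` (with `m = n − 1`)
it equals `(−1)^m·a·cos((χ − s_m)/(b^m·T))`, extended evenly to `χ < 0`. -/
noncomputable def satN (a b T : ℝ) (χ : ℝ) : ℝ :=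
  (-1 : ℝ) ^ (seg b T |χ|) * a *
    Real.cos ((|χ| - brk b T (seg b T |χ|)) / (b ^ (seg b T |χ|) * T))

/-- The integrated function `G_{a,b,T}(χ) = ∫_0^χ N_{a,b,T}(τ) dτ`. -/
noncomputable def satG (a b T : ℝ) (χ : ℝ) : ℝ := ∫ τ in (0:ℝ)..χ, satN a b T τ

/-- Two triples `(a₁,b₁,T₁)`, `(a₂,b₂,T₂)` are 4-chained. -/
def Chained4 (a₁ b₁ T₁ a₂ b₂ T₂ : ℝ) : Prop :=
  0 < a₂ ∧ 1 < b₂ ∧ 0 < T₂ ∧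
    b₁ = b₂ ^ 4 ∧ a₁ = (b₂ ^ 3 / (1 + b₂ + b₂ ^ 2 + b₂ ^ 3)) * a₂ ∧
    T₁ = (1 + b₂ + b₂ ^ 2 + b₂ ^ 3) * T₂

section Breakpoints

variable {b T : ℝ}

lemma brk_zero (b T : ℝ) : brk b T 0 = 0 := by simp [brk]

lemma brk_succ (hb : b ≠ 1) (n : ℕ) : brk b T (n + 1) = brk b T n + π * T * b ^ n := by
  have : b - 1 ≠ 0 := sub_ne_zero.2 hb
  unfold brk
  field_simp
  ring

lemma brk_strictMono (hb : 1 < b) (hT : 0 < T) : StrictMono (brk b T) :=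
  strictMono_nat_of_lt_succ fun n => by
    rw [brk_succ hb.ne']
    have : 0 < π * T * b ^ n := by positivity
    linarith

lemma brk_nonneg (hb : 1 < b) (hT : 0 < T) (n : ℕ) : 0 ≤ brk b T n :=
  brk_zero b T ▸ (brk_strictMono hb hT).monotone n.zero_le

lemma mul_natCast_le_brk (hb : 1 < b) (hT : 0 < T) (n : ℕ) : π * T * n ≤ brk b T n := by
  induction n with
  | zero => simp [brk_zero]
  | succ n ih =>
    have : π * T ≤ π * T * b ^ n := le_mul_of_one_le_right (by positivity) (one_le_pow₀ hb.le)
    rw [brk_succ hb.ne']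
    push_cast
    linarith

lemma brk_add_pi_div_two_mem_Icc (hb : 1 < b) (hT : 0 < T) (n : ℕ) :
    brk b T n + π / 2 * (b ^ n * T) ∈ Icc (brk b T n) (brk b T (n + 1)) := by
  have : 0 < π * (b ^ n * T) := by positivity
  constructor
  · linarith
  · rw [brk_succ hb.ne']
    linarith

lemma brk_pow_geom_sum (hb : 1 < b) {k : ℕ} (hk : k ≠ 0) (n : ℕ) :
    brk (b ^ k) ((∑ i ∈ Finset.range k, b ^ i) * T) n = brk b T (k * n) := by
  have h₁ : b - 1 ≠ 0 := sub_ne_zero.2 hb.ne'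
  have hk : b ^ k - 1 ≠ 0 := sub_ne_zero.2 (one_lt_pow₀ hb hk).ne'
  rw [geom_sum_eq hb.ne']
  unfold brk
  rw [pow_mul]
  field_simp

end Breakpoints

section Segment

variable {b T x : ℝ} {n : ℕ}

lemma lt_brk_seg_succ (hb : 1 < b) (hT : 0 < T) (x : ℝ) : x < brk b T (seg b T x + 1) := by
  refine Nat.sInf_mem (s := {n : ℕ | x < brk b T (n + 1)}) ?_
  obtain ⟨n, hn⟩ := exists_nat_gt (x / (π * T))
  refine ⟨n, ?_⟩
  have hx : x < π * T * n := by rwa [div_lt_iff₀' (by positivity)] at hn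
  have : π * T * n ≤ π * T * (n + 1 : ℕ) := by gcongr; omega
  exact hx.trans_le (this.trans (mul_natCast_le_brk hb hT _))

lemma seg_le_of_lt_brk (h : x < brk b T (n + 1)) : seg b T x ≤ n :=
  Nat.sInf_le h

lemma brk_seg_le (hx : 0 ≤ x) : brk b T (seg b T x) ≤ x := by
  by_contra! hlt
  cases hm : seg b T x with
  | zero => rw [hm, brk_zero] at hlt; linarith
  | succ m => have := seg_le_of_lt_brk (hm ▸ hlt); omega

lemma seg_eq_of_mem_Ico (hb : 1 < b) (hT : 0 < T) (hx : x ∈ Ico (brk b T n) (brk b T (n + 1))) :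
    seg b T x = n := by
  refine le_antisymm (seg_le_of_lt_brk hx.2) ?_
  by_contra! hlt
  have := (brk_strictMono hb hT).monotone (Nat.succ_le_of_lt hlt)
  linarith [hx.1, lt_brk_seg_succ hb hT x]

lemma seg_monotone (hb : 1 < b) (hT : 0 < T) : Monotone (seg b T) :=
  fun _ y hxy => seg_le_of_lt_brk (hxy.trans_lt (lt_brk_seg_succ hb hT y))

end Segment

section Nussbaum

variable {a b T χ : ℝ} {n : ℕ}

lemma satN_eq_of_mem_Ico (hb : 1 < b) (hT : 0 < T)
    (hχ : χ ∈ Ico (brk b T n) (brk b T (n + 1))) :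
    satN a b T χ = (-1) ^ n * a * cos ((χ - brk b T n) / (b ^ n * T)) := by
  have hχ0 : |χ| = χ := abs_of_nonneg ((brk_nonneg hb hT n).trans hχ.1)
  rw [satN, hχ0, seg_eq_of_mem_Ico hb hT hχ]

lemma measurable_satN (hb : 1 < b) (hT : 0 < T) (a : ℝ) : Measurable (satN a b T) := by
  have hseg : Measurable fun χ : ℝ => seg b T |χ| :=
    (seg_monotone hb hT).measurable.comp measurable_abs
  unfold satN
  fun_prop

lemma abs_satN_le (a b T χ : ℝ) : |satN a b T χ| ≤ |a| := by
  simpa [satN, abs_mul] using mul_le_of_le_one_right (abs_nonneg a) (abs_cos_le_one _)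

lemma intervalIntegrable_satN (hb : 1 < b) (hT : 0 < T) (a u v : ℝ) :
    IntervalIntegrable (satN a b T) MeasureTheory.volume u v :=
  (intervalIntegrable_iff).2 <| MeasureTheory.Measure.integrableOn_of_bounded
    measure_Ioc_lt_top.ne (measurable_satN hb hT a).aestronglyMeasurable
    (.of_forall fun χ => abs_satN_le a b T χ)

lemma integral_brk_satN (hb : 1 < b) (hT : 0 < T) (a : ℝ)
    (hχ : χ ∈ Icc (brk b T n) (brk b T (n + 1))) :
    ∫ τ in brk b T n..χ, satN a b T τ =
      (-1) ^ n * a * (b ^ n * T) * sin ((χ - brk b T n) / (b ^ n * T)) := by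
  set s := brk b T n
  set d := b ^ n * T
  have hd : d ≠ 0 := by positivity
  -- the two integrands differ only at the right end `brk b T (n + 1)` of the segment
  have hae : ∀ᵐ τ, τ ∈ uIoc s χ → satN a b T τ = (-1) ^ n * a * cos ((τ - s) / d) := by
    filter_upwards [MeasureTheory.volume.ae_ne (brk b T (n + 1))] with τ hτ hmem
    rw [uIoc_of_le hχ.1] at hmem
    exact satN_eq_of_mem_Ico hb hT ⟨hmem.1.le, (hmem.2.trans hχ.2).lt_of_ne hτ⟩
  rw [intervalIntegral.integral_congr_ae hae, intervalIntegral.integral_const_mul]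
  have := intervalIntegral.integral_comp_sub_right (fun t => cos (t / d)) s (a := s) (b := χ)
  simp only [sub_self] at this
  rw [this, intervalIntegral.integral_comp_div _ hd, integral_cos]
  simp only [zero_div, sin_zero, sub_zero, smul_eq_mul]
  ring

end Nussbaum

section Integrated

variable {a b T χ : ℝ} {m n q : ℕ}

lemma satG_eq_add_integral (hb : 1 < b) (hT : 0 < T) (a u χ : ℝ) :
    satG a b T χ = satG a b T u + ∫ τ in u..χ, satN a b T τ :=
  (intervalIntegral.integral_add_adjacent_intervals (intervalIntegrable_satN hb hT a _ _)
    (intervalIntegrable_satN hb hT a _ _)).symm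

lemma satG_brk (hb : 1 < b) (hT : 0 < T) (a : ℝ) (n : ℕ) : satG a b T (brk b T n) = 0 := by
  induction n with
  | zero => simp [satG, brk_zero]
  | succ n ih =>
    have hlen : (brk b T (n + 1) - brk b T n) / (b ^ n * T) = π := by
      rw [brk_succ hb.ne']
      field_simp
      ring
    rw [satG_eq_add_integral hb hT a (brk b T n), ih, zero_add,
      integral_brk_satN hb hT a ⟨(brk_strictMono hb hT).monotone n.le_succ, le_rfl⟩, hlen,
      sin_pi, mul_zero]

lemma satG_eq_of_mem_Icc (hb : 1 < b) (hT : 0 < T) (a : ℝ)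
    (hχ : χ ∈ Icc (brk b T n) (brk b T (n + 1))) :
    satG a b T χ = (-1) ^ n * a * (b ^ n * T) * sin ((χ - brk b T n) / (b ^ n * T)) := by
  rw [satG_eq_add_integral hb hT a (brk b T n), satG_brk hb hT a n, zero_add,
    integral_brk_satN hb hT a hχ]

lemma abs_satG_le (hb : 1 < b) (hT : 0 < T) (a : ℝ) (hχ : χ ∈ Icc 0 (brk b T (q + 1))) :
    |satG a b T χ| ≤ |a| * T * b ^ q := by
  obtain ⟨j, hjq, hj⟩ : ∃ j ≤ q, χ ∈ Icc (brk b T j) (brk b T (j + 1)) := by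
    rcases le_or_gt (seg b T χ) q with h | h
    · exact ⟨_, h, brk_seg_le hχ.1, (lt_brk_seg_succ hb hT χ).le⟩
    · exact ⟨q, le_rfl, ((brk_strictMono hb hT).monotone h.le).trans (brk_seg_le hχ.1), hχ.2⟩
  rw [satG_eq_of_mem_Icc hb hT a hj]
  calc |(-1) ^ j * a * (b ^ j * T) * sin ((χ - brk b T j) / (b ^ j * T))|
      = |a| * T * b ^ j * |sin ((χ - brk b T j) / (b ^ j * T))| := by
        rw [abs_mul, abs_mul, abs_mul, abs_of_pos (by positivity : 0 < b ^ j * T)]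
        simp only [abs_pow, abs_neg, abs_one, one_pow, one_mul]
        ring
    _ ≤ |a| * T * b ^ j := mul_le_of_le_one_right (by positivity) (abs_sin_le_one _)
    _ ≤ |a| * T * b ^ q := by gcongr; exact hb.le

lemma abs_satG_midpoint (hb : 1 < b) (hT : 0 < T) (a : ℝ) (q : ℕ) :
    |satG a b T (brk b T q + π / 2 * (b ^ q * T))| = |a| * T * b ^ q := by
  have hd : 0 < b ^ q * T := by positivity
  rw [satG_eq_of_mem_Icc hb hT a (brk_add_pi_div_two_mem_Icc hb hT q), add_sub_cancel_left,
    mul_div_cancel_right₀ _ hd.ne', sin_pi_div_two, mul_one, abs_mul, abs_mul, abs_of_pos hd]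
  simp only [abs_pow, abs_neg, abs_one, one_pow, one_mul]
  ring

lemma sSup_abs_satG_Icc (hb : 1 < b) (hT : 0 < T) (a : ℝ) (hmq : m ≤ q) :
    sSup ((fun χ => |satG a b T χ|) '' Icc (brk b T m) (brk b T (q + 1))) = |a| * T * b ^ q := by
  have hmid := brk_add_pi_div_two_mem_Icc hb hT q
  refine IsGreatest.csSup_eq ⟨⟨_, ⟨?_, hmid.2⟩, abs_satG_midpoint hb hT a q⟩, ?_⟩
  · exact ((brk_strictMono hb hT).monotone hmq).trans hmid.1
  · rintro _ ⟨χ, hχ, rfl⟩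
    exact abs_satG_le hb hT a ⟨(brk_nonneg hb hT m).trans hχ.1, hχ.2⟩

end Integrated

namespace Chained4

variable {a₁ b₁ T₁ a₂ b₂ T₂ : ℝ}

lemma one_lt_b₁ (h : Chained4 a₁ b₁ T₁ a₂ b₂ T₂) : 1 < b₁ :=
  h.2.2.2.1 ▸ one_lt_pow₀ h.2.1 (by norm_num)

lemma T₁_pos (h : Chained4 a₁ b₁ T₁ a₂ b₂ T₂) : 0 < T₁ := by
  obtain ⟨-, hb, hT, -, -, rfl⟩ := h
  positivity

lemma brk_eq (h : Chained4 a₁ b₁ T₁ a₂ b₂ T₂) (n : ℕ) : brk b₁ T₁ n = brk b₂ T₂ (4 * n) := by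
  obtain ⟨-, hb, -, rfl, -, rfl⟩ := h
  rw [← brk_pow_geom_sum hb four_ne_zero]
  simp only [Finset.sum_range_succ, Finset.sum_range_zero]
  ring_nf

lemma amplitude_eq (h : Chained4 a₁ b₁ T₁ a₂ b₂ T₂) (n : ℕ) :
    a₁ * T₁ * b₁ ^ n = a₂ * T₂ * b₂ ^ (4 * n + 3) := by
  obtain ⟨-, hb, -, rfl, rfl, rfl⟩ := h
  have : 0 < 1 + b₂ + b₂ ^ 2 + b₂ ^ 3 := by positivity
  field_simp
  ring

end Chained4

/-- for 4-chained triples, breakpoints match (`s_n(b₁,T₁) = s_{4n}(b₂,T₂)`),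
the peak amplitudes match, and the maxima of `|G₁|`, `|G₂|` over matching segments agree. -/
theorem chained_segment_match (a₁ b₁ T₁ a₂ b₂ T₂ : ℝ)
    (h : Chained4 a₁ b₁ T₁ a₂ b₂ T₂) :
    (∀ n : ℕ, brk b₁ T₁ n = brk b₂ T₂ (4 * n)) ∧
    (∀ n : ℕ, 1 ≤ n → a₁ * T₁ * b₁ ^ (n - 1) = a₂ * T₂ * b₂ ^ (4 * n - 1)) ∧
    (∀ n : ℕ, 1 ≤ n →
      sSup ((fun χ => |satG a₁ b₁ T₁ χ|) '' Set.Icc (brk b₁ T₁ (n - 1)) (brk b₁ T₁ n)) =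
      sSup ((fun χ => |satG a₂ b₂ T₂ χ|) ''
        Set.Icc (brk b₂ T₂ (4 * (n - 1))) (brk b₂ T₂ (4 * n)))) := by
  obtain ⟨-, hb₂, hT₂, -⟩ := id h
  refine ⟨h.brk_eq, fun n hn => ?_, fun n hn => ?_⟩ <;>
    obtain ⟨k, rfl⟩ := Nat.exists_eq_add_of_le' hn
  · rw [Nat.add_sub_cancel, show 4 * (k + 1) - 1 = 4 * k + 3 by omega]
    exact h.amplitude_eq k
  · rw [Nat.add_sub_cancel, show 4 * (k + 1) = 4 * k + 3 + 1 by ring,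
      sSup_abs_satG_Icc h.one_lt_b₁ h.T₁_pos a₁ le_rfl,
      sSup_abs_satG_Icc hb₂ hT₂ a₂ (by omega : 4 * k ≤ 4 * k + 3)]
    simpa only [abs_mul, abs_pow, abs_of_pos h.T₁_pos, abs_of_pos hT₂,
      abs_of_pos (one_pos.trans h.one_lt_b₁), abs_of_pos (one_pos.trans hb₂)]
      using congrArg abs (h.amplitude_eq k)
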